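/- Let n ≥ 10^6, let B ~ Bin(n, 1/2) and B' ~ Bin(n−1, 1/2). Let U be the smallest integer c such that Pr[B > c] ≤ 1/(3·e²·n·√6), and let L be the smallest integer c such that Pr[B > c] < 1/(n·√2). Then for every integer x with L + 1 ≤ x ≤ U, it holds that Pr[B' = x] ≥ (2/3) · Pr[B = x]. -/

import Mathlib

/-!
For `x ≤ n` one has `Pr[B' = x] / Pr[B = x] = 2 (n - x) / n`, which is at least `2/3` exactly
when `3x ≤ 2n`. So it suffices that `U ≤ 2n/3`, i.e. that `Pr[B > 2n/3] ≤ 1/(3 e² n √6)`. Since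
`3 e² √6 < 72`, this follows from the Chernoff-type estimate `S · 2^a ≤ 3^n` for
`S = ∑_{k ≥ a} C(n, k)` and `a > 2n/3`, which gives `72 n S ≤ 2^n` as soon as `n ≥ 200`.
-/

/-- The probability mass function of the binomial distribution `Bin(n, p)`:
`Pr[B = k] = C(n,k) p^k (1-p)^(n-k)`. -/
noncomputable def binomPMF (n : ℕ) (p : ℝ) (k : ℕ) : ℝ :=
  (n.choose k : ℝ) * p ^ k * (1 - p) ^ (n - k)

/-- `Pr[B > c]` for `B ~ Bin(n, p)`. -/
noncomputable def prGT (n : ℕ) (p : ℝ) (c : ℕ) : ℝ :=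
  ∑ k ∈ Finset.Icc (c + 1) n, binomPMF n p k

/-- `L` : the smallest integer `c` such that `Pr[B > c] < 1/(n·√2)`
for `B ~ Bin(n, 1/2)`. -/
noncomputable def Lhalf (n : ℕ) : ℕ :=
  sInf {c : ℕ | prGT n (1 / 2) c < 1 / ((n : ℝ) * Real.sqrt 2)}

/-- `U` : the smallest integer `c` such that `Pr[B > c] ≤ 1/(3·e²·n·√6)`
for `B ~ Bin(n, 1/2)`. -/
noncomputable def Uhalf (n : ℕ) : ℕ :=
  sInf {c : ℕ | prGT n (1 / 2) c ≤ 1 / (3 * Real.exp 1 ^ 2 * (n : ℝ) * Real.sqrt 6)}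

theorem sum_Icc_choose_mul_pow_le {R : Type*} [CommSemiring R] [PartialOrder R] [IsOrderedRing R]
    {r : R} (hr : 1 ≤ r) (n a : ℕ) :
    (∑ k ∈ Finset.Icc a n, (n.choose k : R)) * r ^ a ≤ (r + 1) ^ n := by
  have hr₀ : 0 ≤ r := zero_le_one.trans hr
  simp only [add_pow, one_pow, mul_one, Finset.sum_mul]
  calc ∑ k ∈ Finset.Icc a n, (n.choose k : R) * r ^ a
      ≤ ∑ k ∈ Finset.Icc a n, r ^ k * n.choose k := by
        refine Finset.sum_le_sum fun k hk => ?_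
        rw [mul_comm]
        exact mul_le_mul_of_nonneg_right (pow_le_pow_right₀ hr (Finset.mem_Icc.mp hk).1)
          (Nat.cast_nonneg _)
    _ ≤ ∑ k ∈ Finset.range (n + 1), r ^ k * n.choose k := by
        refine Finset.sum_le_sum_of_subset_of_nonneg (fun k hk => ?_)
          fun k _ _ => mul_nonneg (pow_nonneg hr₀ k) (Nat.cast_nonneg _)
        simp only [Finset.mem_Icc, Finset.mem_range] at hk ⊢
        omega

theorem pow_three_mul_pow_le_two_mul_pow {n : ℕ} (hn : 200 ≤ n) :
    (72 * n) ^ 3 * 27 ^ n ≤ 2 * 32 ^ n := by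
  induction n, hn using Nat.le_induction with
  | base => norm_num
  | succ n hn ih =>
    have hn2 : 200 * (n * n) ≤ n * (n * n) := Nat.mul_le_mul_right _ hn
    have step : (72 * (n + 1)) ^ 3 * 27 ≤ 32 * (72 * n) ^ 3 := by nlinarith
    calc (72 * (n + 1)) ^ 3 * 27 ^ (n + 1) = (72 * (n + 1)) ^ 3 * 27 * 27 ^ n := by ring
      _ ≤ 32 * (72 * n) ^ 3 * 27 ^ n := by gcongr
      _ = 32 * ((72 * n) ^ 3 * 27 ^ n) := by ring
      _ ≤ 32 * (2 * 32 ^ n) := by gcongr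
      _ = 2 * 32 ^ (n + 1) := by ring

theorem mul_sum_choose_gt_two_thirds_le {n : ℕ} (hn : 200 ≤ n) :
    72 * n * ∑ k ∈ Finset.Icc (2 * n / 3 + 1) n, n.choose k ≤ 2 ^ n := by
  set S := ∑ k ∈ Finset.Icc (2 * n / 3 + 1) n, n.choose k
  have hS : S * 2 ^ (2 * n / 3 + 1) ≤ 3 ^ n := by
    simpa using sum_Icc_choose_mul_pow_le (R := ℕ) one_le_two n (2 * n / 3 + 1)
  have hexp : 2 * n + 1 ≤ 3 * (2 * n / 3 + 1) := by omega
  -- cubing replaces the fractional exponent `2n/3` by the integer bound `hexp`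
  suffices h : (72 * n * S) ^ 3 * 2 ^ (2 * n + 1) ≤ (2 ^ n) ^ 3 * 2 ^ (2 * n + 1) from
    (Nat.pow_le_pow_iff_left three_ne_zero).mp (le_of_mul_le_mul_right h (by positivity))
  calc (72 * n * S) ^ 3 * 2 ^ (2 * n + 1)
      ≤ (72 * n * S) ^ 3 * 2 ^ (3 * (2 * n / 3 + 1)) := by gcongr; norm_num
    _ = (72 * n) ^ 3 * (S * 2 ^ (2 * n / 3 + 1)) ^ 3 := by ring
    _ ≤ (72 * n) ^ 3 * 27 ^ n := by
        rw [show 27 ^ n = (3 ^ n) ^ 3 by rw [← pow_mul, mul_comm, pow_mul]; norm_num]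
        gcongr
    _ ≤ 2 * 32 ^ n := pow_three_mul_pow_le_two_mul_pow hn
    _ = (2 ^ n) ^ 3 * 2 ^ (2 * n + 1) := by
        rw [← pow_mul, ← pow_add, show n * 3 + (2 * n + 1) = 5 * n + 1 by ring, pow_succ, pow_mul]
        norm_num [mul_comm]

theorem binomPMF_half (n k : ℕ) : binomPMF n (1 / 2) k = n.choose k / 2 ^ n := by
  rcases le_or_gt k n with hk | hk
  · rw [binomPMF, show (1 : ℝ) - 1 / 2 = 1 / 2 by norm_num, mul_assoc, ← pow_add,
      Nat.add_sub_cancel' hk, one_div_pow, mul_one_div]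
  · simp [binomPMF, Nat.choose_eq_zero_of_lt hk]

theorem prGT_half (n c : ℕ) :
    prGT n (1 / 2) c = (∑ k ∈ Finset.Icc (c + 1) n, n.choose k : ℕ) / 2 ^ n := by
  simp only [prGT, binomPMF_half, Nat.cast_sum, Finset.sum_div]

theorem prGT_half_two_thirds_le {n : ℕ} (hn : 200 ≤ n) :
    prGT n (1 / 2) (2 * n / 3) ≤ 1 / (72 * n) := by
  have hn₀ : (0 : ℝ) < n := by exact_mod_cast (show 0 < n by omega)
  rw [prGT_half, div_le_div_iff₀ (by positivity) (by positivity), one_mul, mul_comm]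
  exact_mod_cast mul_sum_choose_gt_two_thirds_le hn

theorem three_mul_exp_one_sq_mul_sqrt_six_le : 3 * Real.exp 1 ^ 2 * Real.sqrt 6 ≤ 72 := by
  have he : Real.exp 1 ^ 2 ≤ 8 := by nlinarith [Real.exp_one_lt_d9, Real.exp_pos 1]
  have hs : Real.sqrt 6 ≤ 3 := Real.sqrt_le_iff.mpr ⟨by norm_num, by norm_num⟩
  nlinarith [Real.sqrt_nonneg 6, sq_nonneg (Real.exp 1)]

theorem Uhalf_le {n : ℕ} (hn : 200 ≤ n) : Uhalf n ≤ 2 * n / 3 := by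
  refine Nat.sInf_le ((prGT_half_two_thirds_le hn).trans ?_)
  have hn₀ : (0 : ℝ) < n := by exact_mod_cast (show 0 < n by omega)
  have hs : 0 < Real.sqrt 6 := Real.sqrt_pos.mpr (by norm_num)
  refine one_div_le_one_div_of_le (by positivity) ?_
  nlinarith [three_mul_exp_one_sq_mul_sqrt_six_le]

theorem binomPMF_succ_mul (n : ℕ) (p : ℝ) (k : ℕ) :
    binomPMF (n + 1) p k * (n + 1 - k : ℕ) = binomPMF n p k * (n + 1) * (1 - p) := by
  rcases le_or_gt k n with hk | hk
  · have hchoose : ((n.choose k * (n + 1) : ℕ) : ℝ) = ((n + 1).choose k * (n + 1 - k) : ℕ) :=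
      congrArg _ (Nat.choose_mul_succ_eq n k)
    rw [Nat.succ_sub hk] at hchoose
    rw [binomPMF, binomPMF, Nat.succ_sub hk, pow_succ]
    push_cast at hchoose ⊢
    linear_combination p ^ k * (1 - p) ^ (n - k) * (1 - p) * hchoose.symm
  · simp [binomPMF, Nat.choose_eq_zero_of_lt hk, Nat.sub_eq_zero_of_le hk]

theorem two_thirds_mul_binomPMF_succ_half_le {n k : ℕ} (hk : 3 * k ≤ 2 * (n + 1)) :
    2 / 3 * binomPMF (n + 1) (1 / 2) k ≤ binomPMF n (1 / 2) k := by
  have hrec := binomPMF_succ_mul n (1 / 2) k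
  have hsub : ((n + 1 : ℕ) : ℝ) ≤ 3 * (n + 1 - k : ℕ) := by exact_mod_cast (by omega)
  have hpos : 0 ≤ binomPMF (n + 1) (1 / 2) k := by rw [binomPMF_half]; positivity
  push_cast at hsub
  nlinarith

theorem stmt_17_general (n : ℕ) (hn : 10 ^ 6 ≤ n) (x : ℕ) (hxU : x ≤ Uhalf n) :
    binomPMF (n - 1) (1 / 2) x ≥ (2 / 3) * binomPMF n (1 / 2) x := by
  have hx : 3 * x ≤ 2 * n := by
    have := hxU.trans (Uhalf_le (by omega))
    omega
  obtain ⟨m, rfl⟩ : ∃ m, n = m + 1 := ⟨n - 1, by omega⟩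
  exact two_thirds_mul_binomPMF_succ_half_le hx

/-- For `n ≥ 10^6`, `B ~ Bin(n, 1/2)` and `B' ~ Bin(n−1, 1/2)`, for every integer
`x` with `L + 1 ≤ x ≤ U` it holds that `Pr[B' = x] ≥ (2/3)·Pr[B = x]`. -/
theorem stmt_17 (n : ℕ) (hn : 10 ^ 6 ≤ n) (x : ℕ)
    (hxL : Lhalf n + 1 ≤ x) (hxU : x ≤ Uhalf n) :
    binomPMF (n - 1) (1 / 2) x ≥ (2 / 3) * binomPMF n (1 / 2) x :=
  stmt_17_general n hn x hxU
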